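/- arXiv:1708.03803 — 2 statements merged into one kernel-verified Lean document; each statement's English description precedes it below -/
import Mathlib

section
/- Let a,q,r,n be nonnegative integers with (r-1)a < q ≤ ra and n > r. Let q_0 = q-(r-1)a, and let aⁿ denote the constant sequence (a,a,...,a) of length n. With P defined by P(a;0)=0, P(a;q)=∞ for q>0, and P(a_1,...,a_n;q)=min_{0≤j≤min(q,a_n)} (P(a_1,...,a_{n-1};q-j)+j)(j+1), one has P(aⁿ;q) = (q_0²+q_0)(a+1)^{r-1} + (a+1)^r - (a+1). -/
/-- The recursively defined function `P(a_1,...,a_n;q)` from the paper, taking values in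
`ℕ∞ = ℕ ∪ {∞}`. Here `a : ℕ → ℕ` encodes the sequence via `a 0 = a_1, ..., a (n-1) = a_n`.
`P(a;0) = 0`, `P(a;q) = ∞` for `q > 0`, and for `n > 1`,
`P(a_1,...,a_n;q) = min_{0 ≤ j ≤ min(q, a_n)} (P(a_1,...,a_{n-1}; q-j) + j) * (j+1)`. -/
noncomputable def SegreP (a : ℕ → ℕ) : ℕ → ℕ → ℕ∞
  | 0, _ => 0
  | 1, 0 => 0
  | 1, _ + 1 => ⊤
  | n + 2, q =>
      (Finset.range (min q (a (n + 1)) + 1)).inf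
        (fun j => (SegreP a (n + 1) (q - j) + (j : ℕ∞)) * ((j : ℕ∞) + 1))

/-- The closed-form value. -/
def Nval (a r q : ℕ) : ℕ :=
  ((q - (r - 1) * a) ^ 2 + (q - (r - 1) * a)) * (a + 1) ^ (r - 1) + (a + 1) ^ r - (a + 1)

lemma nval_one (a q : ℕ) : Nval a 1 q = q ^ 2 + q := by
  simp [Nval]

lemma segre_zero (a : ℕ → ℕ) : ∀ n, SegreP a n 0 = 0 := by
  intro n
  induction n using Nat.strong_induction_on with
  | _ n ih =>
    match n with
    | 0 => rfl
    | 1 => rfl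
    | n + 2 =>
      show (Finset.range (min 0 (a (n + 1)) + 1)).inf
        (fun j => (SegreP a (n + 1) (0 - j) + (j : ℕ∞)) * ((j : ℕ∞) + 1)) = 0
      rw [Nat.zero_min]
      simp [Finset.range_one, ih (n + 1) (by omega)]

lemma segre_top (a : ℕ) : ∀ n q, n * a < q → SegreP (fun _ => a) (n + 1) q = ⊤ := by
  intro n
  induction n with
  | zero => intro q hq; match q, hq with | q + 1, _ => rfl
  | succ n ih =>
    intro q hq
    show (Finset.range (min q a + 1)).inf
        (fun j => (SegreP (fun _ => a) (n + 1) (q - j) + (j : ℕ∞)) * ((j : ℕ∞) + 1)) = ⊤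
    refine (Finset.inf_eq_top_iff _ _).mpr ?_
    intro j hj
    rw [Finset.mem_range] at hj
    have hja : j ≤ a := by omega
    have hna : (n + 1) * a = n * a + a := by ring
    rw [ih (q - j) (by omega), top_add, ENat.top_mul]
    exact_mod_cast Nat.succ_ne_zero j

lemma nval_step (a r q : ℕ) (hr : 2 ≤ r) (h1 : (r - 1) * a < q) :
    Nval a r q = (Nval a (r - 1) (q - a) + a) * (a + 1) := by
  obtain ⟨s, rfl⟩ : ∃ s, r = s + 2 := ⟨r - 2, by omega⟩
  unfold Nval
  simp only [show s + 2 - 1 = s + 1 from rfl, show s + 1 - 1 = s from rfl]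
  have hsa : (s + 1) * a = s * a + a := by ring
  have h1' : (s + 1) * a < q := h1
  have e3 : q - a - s * a = q - (s + 1) * a := by omega
  rw [e3]
  set t := q - (s + 1) * a with ht
  have hP1 : a + 1 ≤ (a + 1) ^ (s + 1) := Nat.le_self_pow (by omega) _
  have hP2 : a + 1 ≤ (a + 1) ^ (s + 2) := Nat.le_self_pow (by omega) _
  have hb1 : a + 1 ≤ (t ^ 2 + t) * (a + 1) ^ (s + 1) + (a + 1) ^ (s + 2) :=
    le_trans hP2 (Nat.le_add_left _ _)
  have hb2 : a + 1 ≤ (t ^ 2 + t) * (a + 1) ^ s + (a + 1) ^ (s + 1) :=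
    le_trans hP1 (Nat.le_add_left _ _)
  zify [hb1, hb2]
  rw [pow_succ ((a : ℤ) + 1) (s + 1), pow_succ ((a : ℤ) + 1) s]
  ring

lemma nval_le_same (a r q j : ℕ) (hr : 1 ≤ r) (h1 : (r - 1) * a < q - j)
    (hj : j ≤ a) (hjq : j ≤ q) :
    Nval a r q ≤ (Nval a r (q - j) + j) * (j + 1) := by
  set s := q - j - (r - 1) * a with hs
  have hs1 : 1 ≤ s := by omega
  have hq0 : q - (r - 1) * a = s + j := by omega
  unfold Nval
  rw [hq0, ← hs]
  have hrr : (a + 1) ^ r = (a + 1) ^ (r - 1) * (a + 1) := by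
    rw [← pow_succ, show r - 1 + 1 = r by omega]
  rw [hrr]
  set P := (a + 1) ^ (r - 1) with hP
  have hP1 : 1 ≤ P := Nat.one_le_pow _ _ (by omega)
  have hb1 : a + 1 ≤ ((s + j) ^ 2 + (s + j)) * P + P * (a + 1) :=
    le_trans (Nat.le_mul_of_pos_left _ hP1) (Nat.le_add_left _ _)
  have hb2 : a + 1 ≤ (s ^ 2 + s) * P + P * (a + 1) :=
    le_trans (Nat.le_mul_of_pos_left _ hP1) (Nat.le_add_left _ _)
  zify [hb1, hb2]
  have hkey : ((a : ℤ) - j) ≤ P * ((s : ℤ) ^ 2 - s + a - j) := by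
    have h0 : (0 : ℤ) ≤ (s : ℤ) ^ 2 - s := by nlinarith [hs1]
    have h2 : ((a : ℤ) - j) ≤ (s : ℤ) ^ 2 - s + a - j := by linarith
    nlinarith [hP1, h0, h2]
  nlinarith [mul_nonneg (by exact_mod_cast Nat.zero_le j : (0 : ℤ) ≤ j)
      (by linarith : (0 : ℤ) ≤ (P : ℤ) * ((s : ℤ) ^ 2 - s + a - j) + j - a)]

lemma int_cross (D a q0 t : ℤ) (hD : 1 ≤ D) (hq0 : 1 ≤ q0) (hqt : q0 ≤ t) (hta : t ≤ a) :
    (q0 ^ 2 + q0) * (D * (a + 1)) + (D * (a + 1) ^ 2 - (a + 1)) ≤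
      ((t ^ 2 + t) * D + (D * (a + 1) - (a + 1)) + (q0 + a - t)) * ((q0 + a - t) + 1) := by
  set u : ℤ := t - q0 with hu
  have hu0 : 0 ≤ u := by omega
  have hw : 0 ≤ a - q0 - u := by omega
  set X : ℤ := (2 * q0 + u + 1) * (a + 1 - u) - q0 ^ 2 - q0 - (a + 1) with hX
  have h1 : a - u ≤ X := by
    nlinarith [mul_nonneg hw (by omega : (0 : ℤ) ≤ 2 * q0 + u - 1),
      mul_nonneg hu0 (by linarith : (0 : ℤ) ≤ q0), sq_nonneg q0]
  have h2 : (0 : ℤ) ≤ a - u := by omega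
  have h3 : a - u ≤ D * X := by
    nlinarith [mul_nonneg (by linarith : (0 : ℤ) ≤ D - 1) (by linarith : (0 : ℤ) ≤ X)]
  have hid : ((t ^ 2 + t) * D + (D * (a + 1) - (a + 1)) + (q0 + a - t)) * ((q0 + a - t) + 1)
      - ((q0 ^ 2 + q0) * (D * (a + 1)) + (D * (a + 1) ^ 2 - (a + 1)))
      = u * (D * X - (a - u)) := by
    simp only [hX, hu]; ring
  have hnn : 0 ≤ u * (D * X - (a - u)) :=
    mul_nonneg hu0 (by linarith : (0 : ℤ) ≤ D * X - (a - u))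
  linarith [hid, hnn]

set_option maxHeartbeats 1000000 in
lemma nval_le_cross (a r q j : ℕ) (hr : 2 ≤ r) (hq1 : (r - 1) * a < q) (hq2 : q ≤ r * a)
    (hj1 : q - (r - 1) * a ≤ j) (hj2 : j ≤ a) :
    Nval a r q ≤ (Nval a (r - 1) (q - j) + j) * (j + 1) := by
  have hra : r * a = (r - 1) * a + a := by
    nth_rewrite 1 [show r = (r - 1) + 1 by omega]; ring
  have hr1a : (r - 1) * a = (r - 2) * a + a := by
    rw [show r - 1 = (r - 2) + 1 by omega]; ring
  have hr11 : r - 1 - 1 = r - 2 := by omega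
  have hq01 : 1 ≤ q - (r - 1) * a := by omega
  have hq0a : q - (r - 1) * a ≤ a := by omega
  have hqj : q - j - (r - 1 - 1) * a = (q - (r - 1) * a) + a - j := by
    rw [hr11]; omega
  unfold Nval
  rw [hqj, hr11]
  set q0 := q - (r - 1) * a with hq0
  set t := q0 + a - j with htdef
  have e1 : (a + 1) ^ r = (a + 1) ^ (r - 2) * (a + 1) ^ 2 := by
    rw [← pow_add, show r - 2 + 2 = r by omega]
  have e2 : (a + 1) ^ (r - 1) = (a + 1) ^ (r - 2) * (a + 1) := by
    rw [← pow_succ, show r - 2 + 1 = r - 1 by omega]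
  rw [e1, e2]
  set D := (a + 1) ^ (r - 2) with hD
  have hD1 : 1 ≤ D := Nat.one_le_pow _ _ (by omega)
  have hb1 : a + 1 ≤ (q0 ^ 2 + q0) * (D * (a + 1)) + D * (a + 1) ^ 2 := by
    calc a + 1 ≤ (a + 1) ^ 2 := by nlinarith
    _ ≤ D * (a + 1) ^ 2 := Nat.le_mul_of_pos_left _ hD1
    _ ≤ _ := Nat.le_add_left _ _
  have hb2 : a + 1 ≤ (t ^ 2 + t) * D + D * (a + 1) := by
    calc a + 1 ≤ D * (a + 1) := Nat.le_mul_of_pos_left _ hD1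
    _ ≤ _ := Nat.le_add_left _ _
  zify [hb1, hb2]
  have ht1 : (q0 : ℤ) ≤ t := by omega
  have ht2 : (t : ℤ) ≤ a := by omega
  have hjt : (j : ℤ) = q0 + a - t := by omega
  rw [hjt]
  have hfin := int_cross (D : ℤ) (a : ℤ) (q0 : ℤ) (t : ℤ) (by exact_mod_cast hD1)
    (by exact_mod_cast hq01) ht1 ht2
  linarith [hfin]

lemma cast_le_term (x y j : ℕ) (h : y ≤ (x + j) * (j + 1)) :
    (y : ℕ∞) ≤ ((x : ℕ∞) + (j : ℕ∞)) * ((j : ℕ∞) + 1) := by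
  have he : ((x : ℕ∞) + (j : ℕ∞)) * ((j : ℕ∞) + 1) = (((x + j) * (j + 1) : ℕ) : ℕ∞) := by
    push_cast; ring
  rw [he]
  exact_mod_cast h

lemma segre_main (a : ℕ) (ha : 1 ≤ a) :
    ∀ n q r, 1 ≤ r → (r - 1) * a < q → q ≤ r * a → r < n →
      SegreP (fun _ => a) n q = (Nval a r q : ℕ∞) := by
  intro n
  induction n using Nat.strong_induction_on with
  | _ n ih =>
    intro q r hr hq1 hq2 hrn
    obtain ⟨m, rfl⟩ : ∃ m, n = m + 2 := ⟨n - 2, by omega⟩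
    have hra : r * a = (r - 1) * a + a := by
      nth_rewrite 1 [show r = (r - 1) + 1 by omega]; ring
    show (Finset.range (min q a + 1)).inf
        (fun j => (SegreP (fun _ => a) (m + 1) (q - j) + (j : ℕ∞)) * ((j : ℕ∞) + 1))
      = (Nval a r q : ℕ∞)
    apply le_antisymm
    · have hmem : min q a ∈ Finset.range (min q a + 1) := by simp
      refine le_trans (Finset.inf_le hmem) ?_
      by_cases h1 : r = 1
      · subst h1
        have hmin : min q a = q := by omega
        rw [hmin, Nat.sub_self, segre_zero, zero_add, nval_one]
        have he : (q : ℕ∞) * ((q : ℕ∞) + 1) = ((q ^ 2 + q : ℕ) : ℕ∞) := by push_cast; ring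
        rw [he]
      · have hr2 : 2 ≤ r := by omega
        have haa : a ≤ (r - 1) * a := Nat.le_mul_of_pos_left a (by omega)
        have hmin : min q a = a := by omega
        rw [hmin]
        have hr1a : (r - 1) * a = (r - 2) * a + a := by
          rw [show r - 1 = (r - 2) + 1 by omega]; ring
        have hrec : SegreP (fun _ => a) (m + 1) (q - a) = (Nval a (r - 1) (q - a) : ℕ∞) := by
          refine ih (m + 1) (by omega) (q - a) (r - 1) (by omega) ?_ ?_ (by omega)
          · rw [show r - 1 - 1 = r - 2 by omega]; omega
          · omega
        rw [hrec]
        have he : ((Nval a (r - 1) (q - a) : ℕ∞) + (a : ℕ∞)) * ((a : ℕ∞) + 1)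
            = (((Nval a (r - 1) (q - a) + a) * (a + 1) : ℕ) : ℕ∞) := by push_cast; ring
        rw [he, ← nval_step a r q hr2 hq1]
    · refine Finset.le_inf ?_
      intro j hj
      rw [Finset.mem_range] at hj
      have hjq : j ≤ q := by omega
      have hja : j ≤ a := by omega
      by_cases hcase : (r - 1) * a < q - j
      · by_cases hrm : r < m + 1
        · rw [ih (m + 1) (by omega) (q - j) r hr hcase (by omega) hrm]
          exact cast_le_term _ _ _ (nval_le_same a r q j hr hcase hja hjq)
        · have hrm' : r = m + 1 := by omega
          have htop : SegreP (fun _ => a) (m + 1) (q - j) = ⊤ := by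
            refine segre_top a m (q - j) ?_
            have : (r - 1) * a = m * a := by rw [hrm']; simp
            omega
          rw [htop, top_add, ENat.top_mul]
          · exact le_top
          · exact_mod_cast Nat.succ_ne_zero j
      · push_neg at hcase
        by_cases h1 : r = 1
        · subst h1
          have hj' : j = q := by omega
          subst hj'
          rw [Nat.sub_self, segre_zero, zero_add, nval_one]
          have he : (j : ℕ∞) * ((j : ℕ∞) + 1) = ((j ^ 2 + j : ℕ) : ℕ∞) := by push_cast; ring
          rw [he]
        · have hr2 : 2 ≤ r := by omega
          have hr1a : (r - 1) * a = (r - 2) * a + a := by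
            rw [show r - 1 = (r - 2) + 1 by omega]; ring
          have hrec : SegreP (fun _ => a) (m + 1) (q - j)
              = (Nval a (r - 1) (q - j) : ℕ∞) := by
            refine ih (m + 1) (by omega) (q - j) (r - 1) (by omega) ?_ ?_ (by omega)
            · rw [show r - 1 - 1 = r - 2 by omega]; omega
            · omega
          rw [hrec]
          exact cast_le_term _ _ _
            (nval_le_cross a r q j hr2 hq1 hq2 (by omega) hja)

/-- Closed formula for `P(aⁿ;q)` when `(r-1)a < q ≤ ra` and `n > r ≥ 1`:
`P(aⁿ;q) = (q₀² + q₀)(a+1)^{r-1} + (a+1)^r - (a+1)` where `q₀ = q - (r-1)a`. -/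
theorem segreP_const_eq (a q r n : ℕ) (hr : 1 ≤ r) (hq₁ : (r - 1) * a < q)
    (hq₂ : q ≤ r * a) (hn : r < n) :
    SegreP (fun _ => a) n q =
      (((q - (r - 1) * a) ^ 2 + (q - (r - 1) * a)) * (a + 1) ^ (r - 1)
          + (a + 1) ^ r - (a + 1) : ℕ) := by
  rcases Nat.eq_zero_or_pos a with ha | ha
  · subst ha
    have : q ≤ 0 := by simpa using hq₂
    omega
  · exact segre_main a ha n q r hr hq₁ hq₂ hn
end

section
/- Let a,q,r,n be nonnegative integers with (r-1)a < q ≤ ra and n ≤ r. Then P(aⁿ;q) = ∞, where P is defined by P(a;0)=0, P(a;q)=∞ for q>0, and P(a_1,...,a_n;q)=min_{0≤j≤min(q,a_n)} (P(a_1,...,a_{n-1};q-j)+j)(j+1). -/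
/-- If `(r-1)a < q ≤ ra` and `n ≤ r`, then `P(aⁿ;q) = ∞`. -/
theorem segreP_const_eq_top (a q r n : ℕ) (hn : 1 ≤ n) (hnr : n ≤ r)
    (hq₁ : (r - 1) * a < q) (hq₂ : q ≤ r * a) :
    SegreP (fun _ => a) n q = ⊤ := by
  induction n using Nat.strong_induction_on generalizing q r with
  | _ n ih =>
    match n, hn with
    | 1, _ =>
      have hq : 0 < q := lt_of_le_of_lt (Nat.zero_le _) hq₁
      obtain ⟨q, rfl⟩ := Nat.exists_eq_succ_of_ne_zero hq.ne'
      rfl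
    | m + 2, _ =>
      rw [SegreP, Finset.inf_eq_top_iff]
      intro j hj
      simp only [Finset.mem_range] at hj
      have hja : j ≤ a := by omega
      have hjq : j ≤ q := by omega
      have key : SegreP (fun _ => a) (m + 1) (q - j) = ⊤ := by
        by_cases hc : (r - 1) * a < q - j
        · exact ih (m + 1) (by omega) (q - j) r (by omega) (by omega) hc
            (le_trans (Nat.sub_le _ _) hq₂)
        · have hr2 : (r - 1) * a = (r - 2) * a + a := by
            have h : r - 1 = (r - 2) + 1 := by omega
            rw [h, add_mul, one_mul]
          have h1 : (r - 2) * a + j < q := by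
            calc (r - 2) * a + j ≤ (r - 2) * a + a := by omega
              _ = (r - 1) * a := hr2.symm
              _ < q := hq₁
          have h2 : (r - 1 - 1) * a < q - j := by
            have : r - 1 - 1 = r - 2 := by omega
            rw [this]
            exact Nat.lt_sub_of_add_lt h1
          exact ih (m + 1) (by omega) (q - j) (r - 1) (by omega) (by omega) h2 (Nat.le_of_not_lt hc)
      rw [key]
      simp
end
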